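/- arXiv:2106.04782 — 4 statements merged into one kernel-verified Lean document; each statement's English description precedes it below -/
import Mathlib

section
/- Let C ⊆ ℝ² be the interior of a strictly convex body and let p, q ∈ ℝ² be distinct points. Then there are at most two vectors x ∈ ℝ² such that both p and q lie on the boundary of x + C. -/
/-- The translateSet `x + C` of a set `C ⊆ ℝ²` by a vector `x`. -/
def translateSet (x : ℝ × ℝ) (C : Set (ℝ × ℝ)) : Set (ℝ × ℝ) :=
  (fun y => x + y) '' C

lemma segFalse {K : Set (ℝ × ℝ)} (hst : StrictConvex ℝ K) {u y z : ℝ × ℝ}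
    (hu : u ∈ K) (hy : y ∈ K) (huy : u ≠ y) {l : ℝ} (h0 : 0 < l) (h1 : l < 1)
    (hz : z = l • u + (1 - l) • y) (hzf : z ∈ frontier K) : False := by
  have hi : z ∈ interior K := hz ▸ hst hu hy huy h0 (by linarith) (by ring)
  exact hzf.2 hi

lemma perp {v z : ℝ × ℝ} (hv : v ≠ 0) (hz : z.1 * v.2 - z.2 * v.1 = 0) :
    ∃ t : ℝ, z = t • v := by
  by_cases h1 : v.1 = 0
  · have h2 : v.2 ≠ 0 := by intro h2; exact hv (Prod.ext h1 h2)
    have hz1 : z.1 = 0 := by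
      rw [h1] at hz
      have : z.1 * v.2 = 0 := by linarith
      rcases mul_eq_zero.mp this with h | h
      · exact h
      · exact absurd h h2
    refine ⟨z.2 / v.2, Prod.ext ?_ ?_⟩
    · simp [h1, hz1]
    · simp only [Prod.smul_snd, smul_eq_mul]
      field_simp
  · refine ⟨z.1 / v.1, Prod.ext ?_ ?_⟩
    · simp only [Prod.smul_fst, smul_eq_mul]
      field_simp
    · simp only [Prod.smul_snd, smul_eq_mul]
      field_simp
      nlinarith [hz]

/-- If `b` and `b + v` are interior points, no frontier point `c` with `c + v` also
on the frontier can lie on the line `b + ℝ v`. -/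
lemma lineFalse {K : Set (ℝ × ℝ)} (hcl : IsClosed K) (hst : StrictConvex ℝ K)
    {v b c : ℝ × ℝ} (hv : v ≠ 0)
    (hb : b ∈ interior K) (hbv : b + v ∈ interior K)
    (hc : c ∈ frontier K) (hcv : c + v ∈ frontier K)
    {t : ℝ} (ht : c = b + t • v) : False := by
  have hKf : frontier K ⊆ K := hcl.frontier_subset
  have hbK : b ∈ K := interior_subset hb
  have hbvK : b + v ∈ K := interior_subset hbv
  have hcK : c ∈ K := hKf hc
  have hcvK : c + v ∈ K := hKf hcv
  rcases eq_or_ne t 0 with h0 | h0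
  · exact hc.2 (by rw [ht, h0, zero_smul, add_zero]; exact hb)
  rcases eq_or_ne t 1 with h1 | h1
  · exact hc.2 (by rw [ht, h1, one_smul]; exact hbv)
  rcases eq_or_ne t (-1) with hm1 | hm1
  · refine hcv.2 ?_
    have : c + v = b := by rw [ht, hm1]; module
    rw [this]; exact hb
  have hbne : b ≠ b + v := by
    intro h; exact hv (by simpa using h.symm)
  rcases lt_trichotomy t 0 with htn | h | htp
  · -- t < 0
    rcases lt_trichotomy t (-1) with ht1 | h | ht1
    · -- t < -1 : c + v = (-1/t) • b + (1 + 1/t) • c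
      have hbc : b ≠ c := by
        intro h
        exact h0 (by_contra fun h' => (by exact h' (by
          have : t • v = 0 := by rw [ht] at h; linear_combination (norm := module) -h
          rcases smul_eq_zero.mp this with h'' | h''
          · exact h''
          · exact absurd h'' hv)))
      refine segFalse hst hbK hcK hbc (l := -1/t)
        (by rw [show (-1:ℝ)/t = 1/(-t) by ring]; exact one_div_pos.mpr (by linarith))
        (by rw [show (-1:ℝ)/t = 1/(-t) by ring]; exact (div_lt_one (by linarith)).mpr (by linarith)) ?_ hcv
      rw [ht]
      match_scalars <;> (field_simp; all_goals (first | ring1 | (left; ring1) | (left; trivial)))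
    · exact hm1 h
    · -- -1 < t < 0 : c + v = (-t) • b + (1+t) • (b + v)
      refine segFalse hst hbK hbvK hbne (l := -t) (by linarith) (by linarith) ?_ hcv
      rw [ht]; module
  · exact h0 h
  · -- t > 0
    rcases lt_trichotomy t 1 with ht1 | h | ht1
    · -- 0 < t < 1 : c = (1-t) • b + t • (b + v)
      refine segFalse hst hbK hbvK hbne (l := 1 - t) (by linarith) (by linarith) ?_ hc
      rw [ht]; module
    · exact h1 h
    · -- t > 1 : c = (1/t) • (b+v) + (1 - 1/t) • (c+v)
      have hne : b + v ≠ c + v := by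
        intro h
        have : t • v = 0 := by rw [ht] at h; linear_combination (norm := module) -h
        rcases smul_eq_zero.mp this with h'' | h''
        · linarith
        · exact hv h''
      refine segFalse hst hbvK hcvK hne (l := 1/t) (by positivity)
        ((div_lt_one (by linarith)).mpr (by linarith)) ?_ hc
      rw [ht]
      match_scalars <;> (field_simp; all_goals (first | ring1 | (left; ring1) | (left; trivial)))

/-- For a strictly convex closed set, at most two points `a` satisfy
`a ∈ frontier K` and `a + v ∈ frontier K` when `v ≠ 0`. -/
lemma key {K : Set (ℝ × ℝ)} (hcl : IsClosed K) (hst : StrictConvex ℝ K)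
    {v : ℝ × ℝ} (hv : v ≠ 0) {a₁ a₂ a₃ : ℝ × ℝ}
    (f₁ : a₁ ∈ frontier K) (g₁ : a₁ + v ∈ frontier K)
    (f₂ : a₂ ∈ frontier K) (g₂ : a₂ + v ∈ frontier K)
    (f₃ : a₃ ∈ frontier K) (g₃ : a₃ + v ∈ frontier K) :
    a₁ = a₂ ∨ a₁ = a₃ ∨ a₂ = a₃ := by
  by_contra hcon
  push_neg at hcon
  obtain ⟨h12, h13, h23⟩ := hcon
  have hKf : frontier K ⊆ K := hcl.frontier_subset
  set f : ℝ × ℝ → ℝ := fun z => z.1 * v.2 - z.2 * v.1 with hf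
  -- Case A: two points with equal f-value are on a common line of direction v
  have caseA : ∀ a b : ℝ × ℝ, a ∈ frontier K → a + v ∈ frontier K →
      b ∈ frontier K → b + v ∈ frontier K → a ≠ b → f a = f b → False := by
    intro a b ha hav hb hbv hab hfab
    obtain ⟨t, htv⟩ : ∃ t : ℝ, a - b = t • v := by
      apply perp hv
      simp only [Prod.fst_sub, Prod.snd_sub]
      simp only [hf] at hfab
      ring_nf
      ring_nf at hfab
      linarith
    have ht : a = b + t • v := by rw [← htv]; module
    have ht0 : t ≠ 0 := by
      intro h; rw [h, zero_smul, add_zero] at ht; exact hab ht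
    -- collinear: the four frontier points b, a, b+v, a+v at parameters 0, t, 1, t+1
    rcases lt_or_gt_of_ne ht0 with htn | htp
    · -- t < 0 : b = (1/(1-t)) • a + (1 - 1/(1-t)) • (b + v)
      have hne : a ≠ b + v := by
        intro h
        have : (t - 1) • v = 0 := by
          rw [ht] at h; linear_combination (norm := module) h
        rcases smul_eq_zero.mp this with h'' | h''
        · linarith
        · exact hv h''
      refine segFalse hst (hKf ha) (hKf hbv) hne (l := 1/(1-t))
        (one_div_pos.mpr (by linarith)) ((div_lt_one (by linarith)).mpr (by linarith)) ?_ hb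
      have h1t : (1:ℝ) - t ≠ 0 := by linarith
      rw [ht]
      match_scalars <;> (field_simp; all_goals (first | ring1 | (left; ring1) | (left; trivial)))
    · -- t > 0 : a = (1/(1+t)) • b + (1 - 1/(1+t)) • (a + v)
      have hne : b ≠ a + v := by
        intro h
        have : (t + 1) • v = 0 := by
          rw [ht] at h; linear_combination (norm := module) -h
        rcases smul_eq_zero.mp this with h'' | h''
        · linarith
        · exact hv h''
      refine segFalse hst (hKf hb) (hKf hav) hne (l := 1/(1+t))
        (one_div_pos.mpr (by linarith)) ((div_lt_one (by linarith)).mpr (by linarith)) ?_ ha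
      have h1t : (1:ℝ) + t ≠ 0 := by linarith
      rw [ht]
      match_scalars <;> (field_simp; all_goals (first | ring1 | (left; ring1) | (left; trivial)))
  -- Case B: a point whose f-value is strictly between two others gives a contradiction
  have mid : ∀ a b c : ℝ × ℝ, a ∈ frontier K → a + v ∈ frontier K →
      b ∈ frontier K → b + v ∈ frontier K → c ∈ frontier K → c + v ∈ frontier K →
      f a < f b → f b < f c → False := by
    intro a b c ha hav hb hbv hc hcv hab hbc
    have hac : a ≠ c := by intro h; rw [h] at hab; linarith
    have hacv : a + v ≠ c + v := by simpa using hac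
    set l : ℝ := (f c - f b) / (f c - f a) with hl
    have hden : 0 < f c - f a := by linarith
    have hl0 : 0 < l := div_pos (by linarith) hden
    have hl1 : l < 1 := (div_lt_one hden).mpr (by linarith)
    set b' : ℝ × ℝ := l • a + (1 - l) • c with hb'
    have hb'i : b' ∈ interior K := hst (hKf ha) (hKf hc) hac hl0 (by linarith) (by ring)
    have hb'vi : b' + v ∈ interior K := by
      have : b' + v = l • (a + v) + (1 - l) • (c + v) := by rw [hb']; module
      rw [this]
      exact hst (hKf hav) (hKf hcv) hacv hl0 (by linarith) (by ring)
    have hfb' : f b' = f b := by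
      have h1 : f b' = l * f a + (1 - l) * f c := by
        simp only [hb', hf, Prod.fst_add, Prod.snd_add, Prod.smul_fst, Prod.smul_snd,
          smul_eq_mul]
        ring
      rw [h1, hl]
      field_simp
      ring
    obtain ⟨t, htv⟩ : ∃ t : ℝ, b - b' = t • v := by
      apply perp hv
      simp only [Prod.fst_sub, Prod.snd_sub]
      have : f b - f b' = 0 := by rw [hfb']; ring
      simp only [hf] at this
      linarith
    have ht : b = b' + t • v := by rw [← htv]; module
    exact lineFalse hcl hst hv hb'i hb'vi hb hbv ht
  -- f-values are pairwise distinct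
  have ne12 : f a₁ ≠ f a₂ := fun h => caseA a₁ a₂ f₁ g₁ f₂ g₂ h12 h
  have ne13 : f a₁ ≠ f a₃ := fun h => caseA a₁ a₃ f₁ g₁ f₃ g₃ h13 h
  have ne23 : f a₂ ≠ f a₃ := fun h => caseA a₂ a₃ f₂ g₂ f₃ g₃ h23 h
  rcases ne12.lt_or_gt with h12' | h12' <;> rcases ne13.lt_or_gt with h13' | h13' <;>
    rcases ne23.lt_or_gt with h23' | h23'
  · exact mid a₁ a₂ a₃ f₁ g₁ f₂ g₂ f₃ g₃ h12' h23'
  · exact mid a₁ a₃ a₂ f₁ g₁ f₃ g₃ f₂ g₂ h13' h23'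
  · linarith
  · exact mid a₃ a₁ a₂ f₃ g₃ f₁ g₁ f₂ g₂ h13' h12'
  · exact mid a₂ a₁ a₃ f₂ g₂ f₁ g₁ f₃ g₃ h12' h13'
  · linarith
  · exact mid a₂ a₃ a₁ f₂ g₂ f₃ g₃ f₁ g₁ h23' h13'
  · exact mid a₃ a₂ a₁ f₃ g₃ f₂ g₂ f₁ g₁ h23' h12'


lemma frontier_translateSet (x : ℝ × ℝ) (C : Set (ℝ × ℝ)) :
    frontier (translateSet x C) = (fun y => x + y) '' frontier C := by
  have h : translateSet x C = (Homeomorph.addLeft x) '' C := rfl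
  rw [h, ← Homeomorph.image_frontier]
  rfl

/-- Let `C` be the interior of a strictly convex body `K ⊆ ℝ²` and let `p ≠ q` be two
points. Then there are at most two vectors `x` such that both `p` and `q` lie on the
boundary of `x + C`. -/
theorem stmt6 (K : Set (ℝ × ℝ))
    (hKcomp : IsCompact K) (hKconv : Convex ℝ K) (hKint : (interior K).Nonempty)
    (hKstrict : StrictConvex ℝ K)
    (C : Set (ℝ × ℝ)) (hC : C = interior K)
    (p q : ℝ × ℝ) (hpq : p ≠ q)
    (x₁ x₂ x₃ : ℝ × ℝ)
    (h₁ : p ∈ frontier (translateSet x₁ C) ∧ q ∈ frontier (translateSet x₁ C))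
    (h₂ : p ∈ frontier (translateSet x₂ C) ∧ q ∈ frontier (translateSet x₂ C))
    (h₃ : p ∈ frontier (translateSet x₃ C) ∧ q ∈ frontier (translateSet x₃ C)) :
    x₁ = x₂ ∨ x₁ = x₃ ∨ x₂ = x₃ := by
  have hcl : IsClosed K := hKcomp.isClosed
  -- closure of the interior is K
  obtain ⟨y₀, hy₀⟩ := hKint
  have hsub : K ⊆ closure (interior K) := by
    intro z hz
    have htend : Filter.Tendsto (fun n : ℕ => z + (1 / (n + 1) : ℝ) • (y₀ - z))
        Filter.atTop (nhds z) := by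
      have h0 : Filter.Tendsto (fun n : ℕ => (1 / (n + 1) : ℝ)) Filter.atTop (nhds 0) :=
        tendsto_one_div_add_atTop_nhds_zero_nat
      have := (h0.smul_const (y₀ - z)).const_add z
      simpa using this
    refine mem_closure_of_tendsto htend (Filter.Eventually.of_forall fun n => ?_)
    exact hKconv.add_smul_sub_mem_interior hz hy₀
      ⟨by positivity, by rw [div_le_one (by positivity)]; linarith [Nat.cast_nonneg (α := ℝ) n]⟩
  have hclint : closure (interior K) = K :=
    subset_antisymm (closure_minimal interior_subset hcl) hsub
  have hfr : frontier C = frontier K := by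
    rw [hC, frontier, interior_interior, hclint, frontier, hcl.closure_eq]
  -- membership translation
  have hmem : ∀ x z : ℝ × ℝ, z ∈ frontier (translateSet x C) → z - x ∈ frontier K := by
    intro x z hz
    rw [frontier_translateSet, hfr] at hz
    obtain ⟨c, hc, hcz⟩ := hz
    have : z - x = c := by rw [← hcz]; module
    rwa [this]
  set v : ℝ × ℝ := q - p with hv'
  have hv : v ≠ 0 := by
    intro h
    exact hpq (by rw [hv'] at h; linear_combination (norm := module) -h)
  have add_eq : ∀ x : ℝ × ℝ, (p - x) + v = q - x := by intro x; rw [hv']; abel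
  have h := key hcl hKstrict hv
    (hmem x₁ p h₁.1) (by rw [add_eq]; exact hmem x₁ q h₁.2)
    (hmem x₂ p h₂.1) (by rw [add_eq]; exact hmem x₂ q h₂.2)
    (hmem x₃ p h₃.1) (by rw [add_eq]; exact hmem x₃ q h₃.2)
  rcases h with h | h | h
  · exact Or.inl (by have := sub_right_injective h; exact this)
  · exact Or.inr (Or.inl (sub_right_injective h))
  · exact Or.inr (Or.inr (sub_right_injective h))
end

section
/- Let C ⊆ ℝ² be the interior of a strictly convex body, and let V ⊆ ℝ² × ℝ² be the set of ordered pairs (p,q) of distinct points such that there exists x ∈ ℝ² with p, q ∈ bd(x+C). Then there exists a continuous function c : V → ℝ² such that for every (p,q) ∈ V both p and q lie on bd(c(p,q) + C), and c is onto in the sense that every translate of C equals c(p,q) + C for some (p,q) ∈ V. -/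
/-- `V C` is the set of ordered pairs of distinct points that lie together on the
boundary of some translate of `C`. -/
def pairsV (C : Set (ℝ × ℝ)) : Set ((ℝ × ℝ) × (ℝ × ℝ)) :=
  {pq | pq.1 ≠ pq.2 ∧ ∃ x : ℝ × ℝ,
    pq.1 ∈ frontier (translateSet x C) ∧ pq.2 ∈ frontier (translateSet x C)}

open Filter Topology Metric Set
open scoped Pointwise

def dotp (w x : ℝ × ℝ) : ℝ := w.1 * x.1 + w.2 * x.2
def rotv (v : ℝ × ℝ) : ℝ × ℝ := (-v.2, v.1)

lemma dotp_add (w x y : ℝ × ℝ) : dotp w (x + y) = dotp w x + dotp w y := by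
  simp [dotp]; ring
lemma dotp_sub (w x y : ℝ × ℝ) : dotp w (x - y) = dotp w x - dotp w y := by
  simp [dotp]; ring
lemma dotp_smul (w : ℝ × ℝ) (t : ℝ) (x : ℝ × ℝ) : dotp w (t • x) = t * dotp w x := by
  simp [dotp]; ring
lemma dotp_rot (v : ℝ × ℝ) : dotp (rotv v) v = 0 := by simp [dotp, rotv]; ring
lemma dotp_self_pos {w : ℝ × ℝ} (hw : w ≠ 0) : 0 < dotp w w := by
  have h : w.1 ≠ 0 ∨ w.2 ≠ 0 := by
    by_contra h
    push_neg at h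
    exact hw (Prod.ext h.1 h.2)
  rcases h with h | h <;>
    · have := mul_self_pos.mpr h
      have h1 := mul_self_nonneg w.1
      have h2 := mul_self_nonneg w.2
      simp only [dotp]; linarith
lemma rotv_ne_zero {v : ℝ × ℝ} (hv : v ≠ 0) : rotv v ≠ 0 := by
  simp only [rotv, ne_eq, Prod.ext_iff, Prod.fst_zero, Prod.snd_zero, neg_eq_zero,
    not_and_or] at *
  tauto
lemma continuous_dotp (w : ℝ × ℝ) : Continuous (dotp w) := by
  unfold dotp; fun_prop

open scoped Pointwise

/-- The set of centers `x` whose translate `x + K` has `p` and `q` in it (i.e. `(p-K) ∩ (q-K)`). -/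
def sideS (K : Set (ℝ × ℝ)) (p : ℝ × ℝ) : Set (ℝ × ℝ) := {x | p - x ∈ K}

/-- Homeomorphism `x ↦ p - x`. -/
def homSub (p : ℝ × ℝ) : (ℝ × ℝ) ≃ₜ (ℝ × ℝ) :=
  (Homeomorph.neg (ℝ × ℝ)).trans (Homeomorph.addLeft p)

lemma homSub_apply (p x : ℝ × ℝ) : homSub p x = p - x := (sub_eq_add_neg p x).symm

lemma sideS_eq (K : Set (ℝ × ℝ)) (p : ℝ × ℝ) : sideS K p = homSub p ⁻¹' K := by
  ext x; simp [sideS, homSub_apply]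

lemma interior_sideS (K : Set (ℝ × ℝ)) (p : ℝ × ℝ) :
    interior (sideS K p) = sideS (interior K) p := by
  rw [sideS_eq, ← Homeomorph.preimage_interior, sideS_eq]

lemma isClosed_sideS {K : Set (ℝ × ℝ)} (hK : IsClosed K) (p : ℝ × ℝ) :
    IsClosed (sideS K p) := by
  rw [sideS_eq]; exact (homSub p).isClosed_preimage.mpr hK

lemma isCompact_sideS {K : Set (ℝ × ℝ)} (hK : IsCompact K) (p : ℝ × ℝ) :
    IsCompact (sideS K p) := by
  rw [sideS_eq]; exact (homSub p).isCompact_preimage.mpr hK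

lemma combo_sub {p x y : ℝ × ℝ} {a b : ℝ} (hab : a + b = 1) :
    p - (a • x + b • y) = a • (p - x) + b • (p - y) := by
  have h : a • (p - x) + b • (p - y) = (a + b) • p - (a • x + b • y) := by module
  rw [h, hab, one_smul]

lemma convex_sideS {K : Set (ℝ × ℝ)} (hK : Convex ℝ K) (p : ℝ × ℝ) :
    Convex ℝ (sideS K p) := by
  intro x hx y hy a b ha hb hab
  show p - _ ∈ K
  rw [combo_sub hab]
  exact hK hx hy ha hb hab

lemma strictConvex_sideS {K : Set (ℝ × ℝ)} (hK : StrictConvex ℝ K) (p : ℝ × ℝ) :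
    StrictConvex ℝ (sideS K p) := by
  intro x hx y hy hxy a b ha hb hab
  have : a • x + b • y ∈ interior (sideS K p) := by
    rw [interior_sideS]
    show p - _ ∈ interior K
    rw [combo_sub hab]
    exact hK hx hy (fun h => hxy (sub_right_inj.mp h)) ha hb hab
  exact this

lemma dotp_neg (w x : ℝ × ℝ) : dotp w (-x) = -dotp w x := by simp [dotp]; ring

/-- In the interior of a set, a nonzero linear functional can always be beaten. -/
lemma exists_gt_interior {S : Set (ℝ × ℝ)} {m w : ℝ × ℝ} (hm : m ∈ interior S) (hw : w ≠ 0) :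
    ∃ z ∈ S, dotp w m < dotp w z := by
  obtain ⟨ε, hε, hball⟩ := Metric.isOpen_iff.mp isOpen_interior m hm
  have hwpos : 0 < ‖w‖ := norm_pos_iff.mpr hw
  set t := ε / (2 * ‖w‖) with ht_def
  have ht : 0 < t := by positivity
  refine ⟨m + t • w, ?_, ?_⟩
  · apply interior_subset (hball ?_)
    rw [mem_ball, dist_eq_norm, add_sub_cancel_left, norm_smul, Real.norm_eq_abs,
      abs_of_pos ht]
    have h1 : t * ‖w‖ = ε / 2 := by
      rw [ht_def]; field_simp
    rw [h1]; linarith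
  · rw [dotp_add, dotp_smul]
    nlinarith [dotp_self_pos hw]

/-- Unique maximizer of a nonzero linear functional on a strictly convex set. -/
lemma eq_of_isMaxOn {S : Set (ℝ × ℝ)} (hS : StrictConvex ℝ S) {w : ℝ × ℝ} (hw : w ≠ 0)
    {x y : ℝ × ℝ} (hx : x ∈ S) (hy : y ∈ S)
    (hmx : IsMaxOn (dotp w) S x) (hmy : IsMaxOn (dotp w) S y) : x = y := by
  by_contra hxy
  have hm : (1/2 : ℝ) • x + (1/2 : ℝ) • y ∈ interior S :=
    hS hx hy hxy (by norm_num) (by norm_num) (by norm_num)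
  obtain ⟨z, hz, hlt⟩ := exists_gt_interior hm hw
  have h1 : dotp w z ≤ dotp w x := hmx hz
  have h2 : dotp w z ≤ dotp w y := hmy hz
  rw [dotp_add, dotp_smul, dotp_smul] at hlt
  linarith

def cenS (K : Set (ℝ × ℝ)) (pq : (ℝ × ℝ) × (ℝ × ℝ)) : Set (ℝ × ℝ) :=
  sideS K pq.1 ∩ sideS K pq.2

def wv (pq : (ℝ × ℝ) × (ℝ × ℝ)) : ℝ × ℝ := rotv (pq.2 - pq.1)

lemma wv_ne_zero {pq : (ℝ × ℝ) × (ℝ × ℝ)} (h : pq.1 ≠ pq.2) : wv pq ≠ 0 :=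
  rotv_ne_zero (sub_ne_zero_of_ne (Ne.symm h))

open scoped Classical in
noncomputable def ctr (K : Set (ℝ × ℝ)) (pq : (ℝ × ℝ) × (ℝ × ℝ)) : ℝ × ℝ :=
  if h : ∃ x, x ∈ cenS K pq ∧ IsMaxOn (dotp (wv pq)) (cenS K pq) x then h.choose else 0

lemma ctr_spec {K : Set (ℝ × ℝ)} {pq : (ℝ × ℝ) × (ℝ × ℝ)}
    (h : ∃ x, x ∈ cenS K pq ∧ IsMaxOn (dotp (wv pq)) (cenS K pq) x) :
    ctr K pq ∈ cenS K pq ∧ IsMaxOn (dotp (wv pq)) (cenS K pq) (ctr K pq) := by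
  rw [ctr, dif_pos h]; exact h.choose_spec

lemma isCompact_cenS {K : Set (ℝ × ℝ)} (hK : IsCompact K) (pq : (ℝ × ℝ) × (ℝ × ℝ)) :
    IsCompact (cenS K pq) :=
  IsCompact.of_isClosed_subset (isCompact_sideS hK pq.1)
    ((isClosed_sideS hK.isClosed pq.1).inter (isClosed_sideS hK.isClosed pq.2))
    inter_subset_left

lemma strictConvex_cenS {K : Set (ℝ × ℝ)} (hK : StrictConvex ℝ K) (pq : (ℝ × ℝ) × (ℝ × ℝ)) :
    StrictConvex ℝ (cenS K pq) :=
  (strictConvex_sideS hK pq.1).inter (strictConvex_sideS hK pq.2)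

lemma exists_max {K : Set (ℝ × ℝ)} (hK : IsCompact K) {pq : (ℝ × ℝ) × (ℝ × ℝ)}
    (hne : (cenS K pq).Nonempty) :
    ∃ x, x ∈ cenS K pq ∧ IsMaxOn (dotp (wv pq)) (cenS K pq) x := by
  obtain ⟨x, hx, hm⟩ :=
    (isCompact_cenS hK pq).exists_isMaxOn hne ((continuous_dotp _).continuousOn)
  exact ⟨x, hx, hm⟩

/-- `pairsV` expressed via the frontier of `K`. -/
def pairsV' (K : Set (ℝ × ℝ)) : Set ((ℝ × ℝ) × (ℝ × ℝ)) :=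
  {pq | pq.1 ≠ pq.2 ∧ ∃ x : ℝ × ℝ, pq.1 - x ∈ frontier K ∧ pq.2 - x ∈ frontier K}

lemma cenS_nonempty {K : Set (ℝ × ℝ)} (hK : IsClosed K) {pq : (ℝ × ℝ) × (ℝ × ℝ)}
    (h : pq ∈ pairsV' K) : (cenS K pq).Nonempty := by
  obtain ⟨-, x, h1, h2⟩ := h
  exact ⟨x, hK.frontier_subset h1, hK.frontier_subset h2⟩

/-- Key step: the maximizer of `dotp w` over `(p-K) ∩ (q-K)` (with `w ⊥ q - p`)
cannot have `p - x` in the interior of `K`. -/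
lemma not_max_of_interior {K : Set (ℝ × ℝ)} (hKconv : Convex ℝ K) (hKstrict : StrictConvex ℝ K)
    {p q x w : ℝ × ℝ} (hpq : p ≠ q) (hw : w ≠ 0) (hw0 : dotp w (q - p) = 0)
    (hp : p - x ∈ interior K) (hq : q - x ∈ K)
    (hmax : IsMaxOn (dotp w) (sideS K p ∩ sideS K q) x) : False := by
  -- Step 1: x maximizes dotp w over all of sideS K q
  have hmaxq : IsMaxOn (dotp w) (sideS K q) x := by
    intro z hz
    simp only [mem_setOf_eq]
    by_contra hlt
    push_neg at hlt
    have hxint : x ∈ interior (sideS K p) := by rw [interior_sideS]; exact hp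
    obtain ⟨ε, hε, hball⟩ := Metric.isOpen_iff.mp isOpen_interior x hxint
    set t := min (1/2 : ℝ) (ε / (2 * (‖z - x‖ + 1))) with ht_def
    have hc0 : (0:ℝ) < ‖z - x‖ + 1 := by positivity
    have ht0 : 0 < t := lt_min (by norm_num) (by positivity)
    have ht1 : t ≤ 1 := le_trans (min_le_left _ _) (by norm_num)
    have hcomb : (1 - t) • x + t • z - x = t • (z - x) := by module
    have hdist : ‖(1 - t) • x + t • z - x‖ < ε := by
      rw [hcomb, norm_smul, Real.norm_eq_abs, abs_of_pos ht0]
      have h1 : t ≤ ε / (2 * (‖z - x‖ + 1)) := min_le_right _ _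
      have h2 : (0:ℝ) ≤ ‖z - x‖ := norm_nonneg _
      calc t * ‖z - x‖ ≤ (ε / (2 * (‖z - x‖ + 1))) * (‖z - x‖ + 1) :=
            mul_le_mul h1 (by linarith) h2 (by positivity)
        _ = ε / 2 := by field_simp
        _ < ε := half_lt_self hε
    have hmem : (1 - t) • x + t • z ∈ sideS K p ∩ sideS K q := by
      constructor
      · exact interior_subset (hball (by rwa [mem_ball, dist_eq_norm]))
      · exact convex_sideS hKconv q hq hz (by linarith) (le_of_lt ht0) (by ring)
    have hle := hmax hmem
    simp only [mem_setOf_eq] at hle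
    rw [dotp_add, dotp_smul, dotp_smul] at hle
    nlinarith
  -- Step 2: y := x + (q - p) is another maximizer on sideS K q
  set y := x + (q - p) with hy_def
  have hyq : y ∈ sideS K q := by
    show q - y ∈ K
    have h : q - y = p - x := by rw [hy_def]; abel
    rw [h]; exact interior_subset hp
  have hxq : x ∈ sideS K q := hq
  have hdy : dotp w y = dotp w x := by rw [hy_def, dotp_add, hw0, add_zero]
  have hmaxy : IsMaxOn (dotp w) (sideS K q) y := by
    intro z hz
    simp only [mem_setOf_eq, hdy]
    exact hmaxq hz
  have hxy : x = y := eq_of_isMaxOn (strictConvex_sideS hKstrict q) hw hxq hyq hmaxq hmaxy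
  have : q - p = 0 := by
    have := hxy.symm
    rw [hy_def] at this
    exact left_eq_add.mp hxy
  exact hpq ((sub_eq_zero.mp this).symm)

/-- The chosen center puts both points on the frontier of its translate. -/
lemma ctr_frontier {K : Set (ℝ × ℝ)} (hKcomp : IsCompact K) (hKconv : Convex ℝ K)
    (hKstrict : StrictConvex ℝ K) {pq : (ℝ × ℝ) × (ℝ × ℝ)} (hpq : pq ∈ pairsV' K) :
    pq.1 - ctr K pq ∈ frontier K ∧ pq.2 - ctr K pq ∈ frontier K := by
  obtain ⟨hc, hm⟩ := ctr_spec (exists_max hKcomp (cenS_nonempty hKcomp.isClosed hpq))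
  have hw : wv pq ≠ 0 := wv_ne_zero hpq.1
  rw [hKcomp.isClosed.frontier_eq]
  constructor
  · refine ⟨hc.1, fun hint => ?_⟩
    exact not_max_of_interior hKconv hKstrict hpq.1 hw (dotp_rot _) hint hc.2 hm
  · refine ⟨hc.2, fun hint => ?_⟩
    have hw0 : dotp (wv pq) (pq.1 - pq.2) = 0 := by
      have h : pq.1 - pq.2 = -(pq.2 - pq.1) := by abel
      rw [h, dotp_neg, show dotp (wv pq) (pq.2 - pq.1) = 0 from dotp_rot _, neg_zero]
    have hm' : IsMaxOn (dotp (wv pq)) (sideS K pq.2 ∩ sideS K pq.1) (ctr K pq) := by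
      rwa [inter_comm]
    exact not_max_of_interior hKconv hKstrict (Ne.symm hpq.1) hw hw0 hint hc.1 hm'

lemma translateSet_eq_preimage (x : ℝ × ℝ) (C : Set (ℝ × ℝ)) :
    translateSet x C = (Homeomorph.addLeft (-x)) ⁻¹' C := by
  ext y
  constructor
  · rintro ⟨c, hc, rfl⟩
    simpa [Homeomorph.addLeft] using hc
  · intro hy
    exact ⟨-x + y, hy, by module⟩

lemma mem_frontier_translateSet {x p : ℝ × ℝ} {C : Set (ℝ × ℝ)} :
    p ∈ frontier (translateSet x C) ↔ p - x ∈ frontier C := by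
  rw [translateSet_eq_preimage, ← Homeomorph.preimage_frontier]
  show -x + p ∈ frontier C ↔ _
  rw [neg_add_eq_sub]

/-- For a closed convex body, the frontier of the interior is the frontier. -/
lemma frontier_interior_eq {K : Set (ℝ × ℝ)} (hKcl : IsClosed K) (hKconv : Convex ℝ K)
    (hKint : (interior K).Nonempty) : frontier (interior K) = frontier K := by
  have hclos : closure (interior K) = K := by
    apply Subset.antisymm
    · calc closure (interior K) ⊆ closure K := closure_mono interior_subset
        _ = K := hKcl.closure_eq
    · intro z hz
      obtain ⟨w, hw⟩ := hKint
      have : Filter.Tendsto (fun t : ℝ => t • w + (1 - t) • z) (𝓝[>] (0:ℝ)) (𝓝 z) := by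
        have hcont : Continuous (fun t : ℝ => t • w + (1 - t) • z) := by fun_prop
        exact (hcont.tendsto' 0 z (by simp)).mono_left nhdsWithin_le_nhds
      refine mem_closure_of_tendsto this ?_
      filter_upwards [Ioo_mem_nhdsGT_of_mem (by norm_num : (0:ℝ) ∈ Ico (0:ℝ) 1)] with t ht
      exact hKconv.combo_interior_self_mem_interior hw hz ht.1 (by linarith [ht.2]) (by ring)
  rw [frontier, frontier, hclos, interior_interior, hKcl.closure_eq]

lemma pairsV_eq {K C : Set (ℝ × ℝ)} (hKcl : IsClosed K) (hKconv : Convex ℝ K)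
    (hKint : (interior K).Nonempty) (hC : C = interior K) : pairsV C = pairsV' K := by
  ext pq
  simp only [pairsV, pairsV', mem_setOf_eq, mem_frontier_translateSet, hC,
    frontier_interior_eq hKcl hKconv hKint]

lemma tendsto_dotp {a b : ℕ → ℝ × ℝ} {a₀ b₀ : ℝ × ℝ}
    (ha : Tendsto a atTop (𝓝 a₀)) (hb : Tendsto b atTop (𝓝 b₀)) :
    Tendsto (fun n => dotp (a n) (b n)) atTop (𝓝 (dotp a₀ b₀)) := by
  have ha1 : Tendsto (fun n => (a n).1) atTop (𝓝 a₀.1) := (continuous_fst.tendsto a₀).comp ha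
  have ha2 : Tendsto (fun n => (a n).2) atTop (𝓝 a₀.2) := (continuous_snd.tendsto a₀).comp ha
  have hb1 : Tendsto (fun n => (b n).1) atTop (𝓝 b₀.1) := (continuous_fst.tendsto b₀).comp hb
  have hb2 : Tendsto (fun n => (b n).2) atTop (𝓝 b₀.2) := (continuous_snd.tendsto b₀).comp hb
  exact (ha1.mul hb1).add (ha2.mul hb2)

lemma continuous_wv : Continuous wv := by
  unfold wv rotv; fun_prop

/-- Identification of limits of centers along sequences in `pairsV'`. -/
lemma ctr_limit {K : Set (ℝ × ℝ)} (hKcomp : IsCompact K) (hKconv : Convex ℝ K)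
    (hKstrict : StrictConvex ℝ K) {pq : (ℝ × ℝ) × (ℝ × ℝ)} (hpq : pq ∈ pairsV' K)
    (u : ℕ → (ℝ × ℝ) × (ℝ × ℝ)) (hu : ∀ n, u n ∈ pairsV' K)
    (hul : Tendsto u atTop (𝓝 pq)) {y : ℝ × ℝ}
    (hy : Tendsto (fun n => ctr K (u n)) atTop (𝓝 y)) : y = ctr K pq := by
  have hspec : ∀ n, ctr K (u n) ∈ cenS K (u n) ∧
      IsMaxOn (dotp (wv (u n))) (cenS K (u n)) (ctr K (u n)) :=
    fun n => ctr_spec (exists_max hKcomp (cenS_nonempty hKcomp.isClosed (hu n)))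
  have hu1 : Tendsto (fun n => (u n).1) atTop (𝓝 pq.1) := (continuous_fst.tendsto pq).comp hul
  have hu2 : Tendsto (fun n => (u n).2) atTop (𝓝 pq.2) := (continuous_snd.tendsto pq).comp hul
  have hwv : Tendsto (fun n => wv (u n)) atTop (𝓝 (wv pq)) := (continuous_wv.tendsto pq).comp hul
  have hyc : y ∈ cenS K pq := by
    constructor
    · show pq.1 - y ∈ K
      apply hKcomp.isClosed.mem_of_tendsto (hu1.sub hy)
      filter_upwards with n using (hspec n).1.1
    · show pq.2 - y ∈ K
      apply hKcomp.isClosed.mem_of_tendsto (hu2.sub hy)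
      filter_upwards with n using (hspec n).1.2
  obtain ⟨hcc, hcm⟩ := ctr_spec (exists_max hKcomp (cenS_nonempty hKcomp.isClosed hpq))
  have hw : wv pq ≠ 0 := wv_ne_zero hpq.1
  by_cases hO : (sideS (interior K) pq.1 ∩ sideS (interior K) pq.2).Nonempty
  · -- the two constraint bodies have overlapping interiors
    have hOle : ∀ z ∈ sideS (interior K) pq.1 ∩ sideS (interior K) pq.2,
        dotp (wv pq) z ≤ dotp (wv pq) y := by
      intro z hz
      have ht1 : Tendsto (fun n => (u n).1 - z) atTop (𝓝 (pq.1 - z)) := hu1.sub tendsto_const_nhds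
      have ht2 : Tendsto (fun n => (u n).2 - z) atTop (𝓝 (pq.2 - z)) := hu2.sub tendsto_const_nhds
      have hev1 : ∀ᶠ n in atTop, (u n).1 - z ∈ K := by
        filter_upwards [ht1.eventually (isOpen_interior.eventually_mem hz.1)] with n hn
          using interior_subset hn
      have hev2 : ∀ᶠ n in atTop, (u n).2 - z ∈ K := by
        filter_upwards [ht2.eventually (isOpen_interior.eventually_mem hz.2)] with n hn
          using interior_subset hn
      have hle : ∀ᶠ n in atTop, dotp (wv (u n)) z ≤ dotp (wv (u n)) (ctr K (u n)) := by
        filter_upwards [hev1, hev2] with n h1 h2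
        exact (hspec n).2 ⟨h1, h2⟩
      exact le_of_tendsto_of_tendsto (tendsto_dotp hwv tendsto_const_nhds)
        (tendsto_dotp hwv hy) hle
    have hmaxy : IsMaxOn (dotp (wv pq)) (cenS K pq) y := by
      intro s hs
      simp only [mem_setOf_eq]
      obtain ⟨z₀, hz₀⟩ := hO
      have hzt : ∀ t : ℝ, 0 < t → t ≤ 1 →
          t • z₀ + (1 - t) • s ∈ sideS (interior K) pq.1 ∩ sideS (interior K) pq.2 := by
        intro t ht0 ht1
        constructor
        · show pq.1 - _ ∈ interior K
          rw [combo_sub (by ring)]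
          exact hKconv.combo_interior_self_mem_interior hz₀.1 hs.1 ht0 (by linarith) (by ring)
        · show pq.2 - _ ∈ interior K
          rw [combo_sub (by ring)]
          exact hKconv.combo_interior_self_mem_interior hz₀.2 hs.2 ht0 (by linarith) (by ring)
      have heq : ∀ t : ℝ, dotp (wv pq) (t • z₀ + (1 - t) • s)
          = t * dotp (wv pq) z₀ + (1 - t) * dotp (wv pq) s := fun t => by
        rw [dotp_add, dotp_smul, dotp_smul]
      have hlim : Tendsto (fun t : ℝ => dotp (wv pq) (t • z₀ + (1 - t) • s)) (𝓝[>] 0)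
          (𝓝 (dotp (wv pq) s)) := by
        simp only [heq]
        have hcont : Continuous (fun t : ℝ => t * dotp (wv pq) z₀ + (1 - t) * dotp (wv pq) s) :=
          by fun_prop
        exact (hcont.tendsto' 0 _ (by ring)).mono_left nhdsWithin_le_nhds
      apply le_of_tendsto hlim
      filter_upwards [Ioc_mem_nhdsGT_of_mem (by norm_num : (0:ℝ) ∈ Ico (0:ℝ) 1)] with t ht
      exact hOle _ (hzt t ht.1 ht.2)
    exact eq_of_isMaxOn (strictConvex_cenS hKstrict pq) hw hyc hcc hmaxy hcm
  · -- otherwise `cenS K pq` is a subsingleton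
    by_contra hne
    have hmid := strictConvex_cenS hKstrict pq hyc hcc hne
      (by norm_num : (0:ℝ) < 1/2) (by norm_num : (0:ℝ) < 1/2) (by norm_num)
    apply hO
    refine ⟨(1/2 : ℝ) • y + (1/2 : ℝ) • ctr K pq, ?_, ?_⟩
    · have h := interior_mono (inter_subset_left :
        cenS K pq ⊆ sideS K pq.1) hmid
      rwa [interior_sideS] at h
    · have h := interior_mono (inter_subset_right :
        cenS K pq ⊆ sideS K pq.2) hmid
      rwa [interior_sideS] at h

lemma continuousOn_ctr {K : Set (ℝ × ℝ)} (hKcomp : IsCompact K) (hKconv : Convex ℝ K)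
    (hKstrict : StrictConvex ℝ K) : ContinuousOn (ctr K) (pairsV' K) := by
  intro pq hpq
  apply tendsto_of_subseq_tendsto
  intro ns hns
  have hnsV : ∀ᶠ n in atTop, ns n ∈ pairsV' K := hns.eventually_mem self_mem_nhdsWithin
  have hns' : Tendsto ns atTop (𝓝 pq) := hns.mono_right nhdsWithin_le_nhds
  have hball : ∀ᶠ n in atTop, (ns n).1 ∈ closedBall pq.1 1 :=
    ((continuous_fst.tendsto pq).comp hns').eventually_mem (closedBall_mem_nhds _ one_pos)
  obtain ⟨N, hN⟩ := (hnsV.and hball).exists_forall_of_atTop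
  set u : ℕ → (ℝ × ℝ) × (ℝ × ℝ) := fun n => ns (n + N) with hu_def
  have huV : ∀ n, u n ∈ pairsV' K := fun n => (hN (n + N) le_add_self).1
  have huB : ∀ n, (u n).1 ∈ closedBall pq.1 1 := fun n => (hN (n + N) le_add_self).2
  have hut : Tendsto u atTop (𝓝 pq) := hns'.comp (tendsto_add_atTop_nat N)
  set T := closedBall pq.1 1 + -K with hT_def
  have hT : IsCompact T := (isCompact_closedBall _ _).add hKcomp.neg
  have hmemT : ∀ n, ctr K (u n) ∈ T := by
    intro n
    have h1 : (u n).1 - ctr K (u n) ∈ K :=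
      (ctr_spec (exists_max hKcomp (cenS_nonempty hKcomp.isClosed (huV n)))).1.1
    have h2 : ctr K (u n) = (u n).1 + -((u n).1 - ctr K (u n)) := by abel
    rw [h2]
    exact add_mem_add (huB n) (Set.neg_mem_neg.mpr h1)
  obtain ⟨y, hyT, φ, hφ, hconv⟩ := hT.tendsto_subseq hmemT
  have hyeq : y = ctr K pq :=
    ctr_limit hKcomp hKconv hKstrict hpq (u ∘ φ) (fun n => huV (φ n))
      (hut.comp hφ.tendsto_atTop) hconv
  exact ⟨fun n => φ n + N, hyeq ▸ hconv⟩

lemma dotp_neg_left (w x : ℝ × ℝ) : dotp (-w) x = -dotp w x := by simp [dotp]; ring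

lemma ctr_surj {K : Set (ℝ × ℝ)} (hKcomp : IsCompact K) (hKconv : Convex ℝ K)
    (hKint : (interior K).Nonempty) (hKstrict : StrictConvex ℝ K) (x : ℝ × ℝ) :
    ∃ pq ∈ pairsV' K, ctr K pq = x := by
  obtain ⟨z, hz⟩ := hKint
  have hKne : K.Nonempty := ⟨z, interior_subset hz⟩
  set e : ℝ × ℝ := (1, 0) with he_def
  have he : e ≠ 0 := by simp [he_def, Prod.ext_iff]
  have hee : dotp e e = 1 := by simp [dotp, he_def]
  have hene : -e ≠ 0 := neg_ne_zero.mpr he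
  obtain ⟨a, haK, hamax⟩ := hKcomp.exists_isMaxOn hKne ((continuous_dotp e).continuousOn)
  obtain ⟨b, hbK, hbmax⟩ := hKcomp.exists_isMaxOn hKne ((continuous_dotp (-e)).continuousOn)
  have hfr : ∀ (w c : ℝ × ℝ), w ≠ 0 → c ∈ K → IsMaxOn (dotp w) K c → c ∈ frontier K := by
    intro w c hw hc hm
    rw [hKcomp.isClosed.frontier_eq]
    refine ⟨hc, fun hint => ?_⟩
    obtain ⟨z', hz', hlt⟩ := exists_gt_interior hint hw
    exact absurd (hm hz') (not_le.mpr hlt)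
  have hafr := hfr e a he haK hamax
  have hbfr := hfr (-e) b hene hbK hbmax
  have hab : dotp e b < dotp e a := by
    obtain ⟨ε, hε, hballz⟩ := Metric.isOpen_iff.mp isOpen_interior z hz
    have hd : ∀ v : ℝ × ℝ, ‖v‖ = 1 → z + (ε/2) • v ∈ K := by
      intro v hv
      apply interior_subset (hballz ?_)
      rw [mem_ball, dist_eq_norm, add_sub_cancel_left, norm_smul, Real.norm_eq_abs,
        abs_of_pos (by positivity), hv]
      linarith
    have hne : ‖e‖ = 1 := by simp [he_def, Prod.norm_def]
    have hnne : ‖-e‖ = 1 := by rw [norm_neg]; exact hne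
    have h1 := hamax (hd e hne)
    have h2 := hbmax (hd (-e) hnne)
    simp only [mem_setOf_eq, dotp_add, dotp_smul] at h1 h2
    rw [hee] at h1
    rw [dotp_neg_left, dotp_neg, dotp_neg_left, hee] at h2
    rw [dotp_neg_left] at h2
    nlinarith
  have habne : a ≠ b := fun h => by rw [h] at hab; exact lt_irrefl _ hab
  set p := x + a with hp_def
  set q := x + b with hq_def
  have hpa : p - x = a := add_sub_cancel_left x a
  have hqb : q - x = b := add_sub_cancel_left x b
  have hpq : (p, q) ∈ pairsV' K := by
    refine ⟨fun h => habne (add_left_cancel (show x + a = x + b from h)), x, ?_, ?_⟩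
    · rwa [hpa]
    · rwa [hqb]
  have hsub : ∀ z' ∈ cenS K (p, q), z' = x := by
    intro z' hz'
    have h1 : p - z' ∈ K := hz'.1
    have h2 : q - z' ∈ K := hz'.2
    have e1 := hamax h1
    have e2 := hbmax h2
    simp only [mem_setOf_eq] at e1 e2
    have hsplit1 : p - z' = a + (x - z') := by rw [hp_def]; abel
    have hsplit2 : q - z' = b + (x - z') := by rw [hq_def]; abel
    rw [hsplit1, dotp_add] at e1
    rw [hsplit2, dotp_add, dotp_neg_left, dotp_neg_left] at e2
    -- e1 : dotp e a + dotp e (x - z') ≤ dotp e a, e2 : -(dotp e b + dotp e (x-z')) ≤ -(dotp e b)... 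
    have hxz : dotp e (x - z') = 0 := by linarith
    have hmax' : IsMaxOn (dotp e) K (p - z') := by
      intro y hy
      simp only [mem_setOf_eq]
      rw [hsplit1, dotp_add, hxz, add_zero]
      exact hamax hy
    have hpa' : p - z' = a := eq_of_isMaxOn hKstrict he h1 haK hmax' hamax
    have : p - z' = p - x := by rw [hpa', hpa]
    exact sub_right_inj.mp this
  have hctr := ctr_spec (exists_max hKcomp (cenS_nonempty hKcomp.isClosed hpq))
  exact ⟨(p, q), hpq, hsub _ hctr.1⟩

/-- Let `C` be the interior of a strictly convex body `K ⊆ ℝ²`, and let `V` be the set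
of ordered pairs of distinct points lying together on the boundary of some translate of
`C`. Then there is a function `c`, continuous on `V`, such that both points of every
pair `(p,q) ∈ V` lie on the boundary of `c (p,q) + C`, and which is onto in the sense
that every translate of `C` arises as `c (p,q) + C` for some `(p,q) ∈ V`. -/
theorem stmt7 (K : Set (ℝ × ℝ))
    (hKcomp : IsCompact K) (hKconv : Convex ℝ K) (hKint : (interior K).Nonempty)
    (hKstrict : StrictConvex ℝ K)
    (C : Set (ℝ × ℝ)) (hC : C = interior K) :
    ∃ c : (ℝ × ℝ) × (ℝ × ℝ) → ℝ × ℝ,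
      ContinuousOn c (pairsV C) ∧
      (∀ pq ∈ pairsV C,
        pq.1 ∈ frontier (translateSet (c pq) C) ∧
        pq.2 ∈ frontier (translateSet (c pq) C)) ∧
      (∀ x : ℝ × ℝ, ∃ pq ∈ pairsV C, translateSet (c pq) C = translateSet x C) := by
  have hVeq : pairsV C = pairsV' K := pairsV_eq hKcomp.isClosed hKconv hKint hC
  have hfrC : frontier C = frontier K := by
    rw [hC]; exact frontier_interior_eq hKcomp.isClosed hKconv hKint
  refine ⟨ctr K, ?_, ?_, ?_⟩
  · rw [hVeq]
    exact continuousOn_ctr hKcomp hKconv hKstrict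
  · intro pq hpq
    rw [hVeq] at hpq
    have h := ctr_frontier hKcomp hKconv hKstrict hpq
    rw [mem_frontier_translateSet, mem_frontier_translateSet, hfrC]
    exact h
  · intro x
    obtain ⟨pq, hpq, hctr⟩ := ctr_surj hKcomp hKconv hKint hKstrict x
    refine ⟨pq, ?_, by rw [hctr]⟩
    rw [hVeq]
    exact hpq
end

section
/- Let C = (0,1)² be the open unit square in ℝ² and let 0 < c < c' < 1. Then there exist a constant α > 0 and n₀ ∈ ℕ, depending only on c and c', such that for every n ≥ n₀ and every integer k with cn ≤ k ≤ c'n there exists a set S ⊆ ℝ² with |S| = n and a_k(S) ≥ α·n². -/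
/-- The number `a_k(S)` of `T_C`-`k`-sets of a finite point set `S`: subsets `T ⊆ S` of
size `k` with `T = S ∩ (x + C)` for some translate `x + C` whose boundary misses `S`. -/
noncomputable def aCount (C : Set (ℝ × ℝ)) (S : Finset (ℝ × ℝ)) (k : ℕ) : ℕ :=
  Set.ncard {T : Finset (ℝ × ℝ) | T ⊆ S ∧ T.card = k ∧ ∃ x : ℝ × ℝ,
    (↑S : Set (ℝ × ℝ)) ∩ frontier (translateSet x C) = ∅ ∧
    (↑T : Set (ℝ × ℝ)) = ↑S ∩ translateSet x C}

/-!
Put the points on a cross: a horizontal and a vertical row meeting at a point `o` that lies in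
every translate used. Such a translate cuts the two rows independently, so it suffices to find, on
a line, `h` positions of a unit window cutting out pairwise distinct sets of a fixed size; pairs of
positions then give `h²` distinct `k`-sets. A row consisting of two blocks of `A` and `B` lattice
points, one unit apart, works: shifting the window by one lattice step loses a point of the first
block and gains one of the second. With lattice spacing `1/N` and windows starting at
half-integer multiples of `1/N`, no point ever lies on the boundary of a translate.
-/

open Set

namespace UnitSquareKSets

lemma translateSet_unitSquare (x : ℝ × ℝ) :
    translateSet x (Ioo 0 1 ×ˢ Ioo 0 1) = Ioo x.1 (x.1 + 1) ×ˢ Ioo x.2 (x.2 + 1) := by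
  ext p
  simp only [translateSet, image_add_left, mem_preimage, mem_prod, mem_Ioo, Prod.fst_add,
    Prod.snd_add, Prod.fst_neg, Prod.snd_neg]
  constructor <;> rintro ⟨⟨h₁, h₂⟩, h₃, h₄⟩ <;> refine ⟨⟨?_, ?_⟩, ?_, ?_⟩ <;> linarith

noncomputable def halfStep (N m : ℕ) : ℝ := ((m : ℝ) + 1 / 2) / N

section halfStep

variable {N i m : ℕ}

lemma halfStep_lt_natCast_div_iff (hN : 0 < N) : halfStep N m < i / N ↔ m < i := by
  rw [halfStep, div_lt_div_iff_of_pos_right (by exact_mod_cast hN)]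
  constructor
  · intro h
    exact_mod_cast (show (m : ℝ) < i by linarith)
  · intro h
    have : (m : ℝ) + 1 ≤ i := by exact_mod_cast h
    linarith

lemma natCast_div_lt_halfStep_iff (hN : 0 < N) : (i : ℝ) / N < halfStep N m ↔ i ≤ m := by
  rw [halfStep, div_lt_div_iff_of_pos_right (by exact_mod_cast hN)]
  constructor
  · intro h
    have : i < m + 1 := by exact_mod_cast (show (i : ℝ) < m + 1 by linarith)
    omega
  · intro h
    have : (i : ℝ) ≤ m := by exact_mod_cast h
    linarith

lemma natCast_div_ne_halfStep (hN : 0 < N) : (i : ℝ) / N ≠ halfStep N m := by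
  intro h
  have hmi : ¬ m < i := fun hmi => ((halfStep_lt_natCast_div_iff hN).2 hmi).ne h.symm
  exact ((natCast_div_lt_halfStep_iff hN).2 (not_lt.1 hmi)).ne h

lemma halfStep_add_one (hN : 0 < N) : halfStep N m + 1 = halfStep N (m + N) := by
  have : (N : ℝ) ≠ 0 := by exact_mod_cast hN.ne'
  rw [halfStep, halfStep]
  field_simp
  push_cast
  ring

end halfStep

noncomputable def latticeEmbed (N : ℕ) (p : ℕ × ℕ) : ℝ × ℝ := ((p.1 : ℝ) / N, (p.2 : ℝ) / N)

def latticeBox (N : ℕ) (st : ℕ × ℕ) : Finset (ℕ × ℕ) :=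
  Finset.Ioc st.1 (st.1 + N) ×ˢ Finset.Ioc st.2 (st.2 + N)

noncomputable def boxCorner (N : ℕ) (st : ℕ × ℕ) : ℝ × ℝ := (halfStep N st.1, halfStep N st.2)

section lattice

variable {N : ℕ}

lemma latticeEmbed_injective (hN : 0 < N) : Function.Injective (latticeEmbed N) := by
  have : (N : ℝ) ≠ 0 := by exact_mod_cast hN.ne'
  rintro ⟨i, j⟩ ⟨i', j'⟩ h
  simp only [latticeEmbed, Prod.mk.injEq, div_left_inj' this, Nat.cast_inj] at h
  rw [h.1, h.2]

lemma latticeEmbed_mem_translateSet_iff (hN : 0 < N) (p st : ℕ × ℕ) :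
    latticeEmbed N p ∈ translateSet (boxCorner N st) (Ioo 0 1 ×ˢ Ioo 0 1) ↔
      p ∈ latticeBox N st := by
  simp only [translateSet_unitSquare, boxCorner, latticeEmbed, latticeBox, halfStep_add_one hN,
    mem_prod, mem_Ioo, Finset.mem_product, Finset.mem_Ioc, halfStep_lt_natCast_div_iff hN,
    natCast_div_lt_halfStep_iff hN]

lemma latticeEmbed_notMem_frontier (hN : 0 < N) (p st : ℕ × ℕ) :
    latticeEmbed N p ∉ frontier (translateSet (boxCorner N st) (Ioo 0 1 ×ˢ Ioo 0 1)) := by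
  rw [translateSet_unitSquare, frontier_prod_eq, frontier_Ioo (lt_add_one _),
    frontier_Ioo (lt_add_one _)]
  simp [boxCorner, latticeEmbed, halfStep_add_one hN, natCast_div_ne_halfStep hN]

lemma card_le_aCount_of_injOn (hN : 0 < N) {k : ℕ} {P D : Finset (ℕ × ℕ)}
    (hcard : ∀ st ∈ D, (P ∩ latticeBox N st).card = k)
    (hinj : InjOn (fun st => P ∩ latticeBox N st) D) :
    D.card ≤ aCount (Ioo 0 1 ×ˢ Ioo 0 1) (P.image (latticeEmbed N)) k := by
  set F : ℕ × ℕ → Finset (ℝ × ℝ) := fun st => (P ∩ latticeBox N st).image (latticeEmbed N)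
  have hF : InjOn F D :=
    (Finset.image_injective (latticeEmbed_injective hN)).comp_injOn hinj
  rw [← ncard_coe_finset, ← hF.ncard_image, aCount]
  refine ncard_le_ncard ?_ ((P.image _).powerset.finite_toSet.subset fun T hT =>
    Finset.mem_coe.2 (Finset.mem_powerset.2 hT.1))
  rintro _ ⟨st, hst, rfl⟩
  refine ⟨Finset.image_subset_image Finset.inter_subset_left, ?_, boxCorner N st, ?_, ?_⟩
  · rw [Finset.card_image_of_injective _ (latticeEmbed_injective hN), hcard st hst]
  · refine eq_empty_iff_forall_notMem.2 ?_
    rintro _ ⟨hq, hfr⟩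
    obtain ⟨p, -, rfl⟩ := Finset.mem_image.1 hq
    exact latticeEmbed_notMem_frontier hN p st hfr
  · ext q
    simp only [F, Finset.coe_image, Finset.coe_inter, mem_image, mem_inter_iff, Finset.mem_coe]
    constructor
    · rintro ⟨p, ⟨hp, hb⟩, rfl⟩
      exact ⟨⟨p, hp, rfl⟩, (latticeEmbed_mem_translateSet_iff hN p st).2 hb⟩
    · rintro ⟨⟨p, hp, rfl⟩, hq⟩
      exact ⟨p, ⟨hp, (latticeEmbed_mem_translateSet_iff hN p st).1 hq⟩, rfl⟩

end lattice

section cross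

variable {α : Type*} [DecidableEq α] {o : α} {I I' J J' : Finset α}

def cross (o : α) (I J : Finset α) : Finset (α × α) := I ×ˢ {o} ∪ {o} ×ˢ J

lemma cross_inter_product {U V : Finset α} (hU : o ∈ U) (hV : o ∈ V) (I J : Finset α) :
    cross o I J ∩ U ×ˢ V = cross o (I ∩ U) (J ∩ V) := by
  ext ⟨x, y⟩
  simp only [cross, Finset.mem_inter, Finset.mem_union, Finset.mem_product,
    Finset.mem_singleton]
  constructor
  · rintro ⟨⟨hx, rfl⟩ | ⟨rfl, hy⟩, hxU, hyV⟩
    exacts [Or.inl ⟨⟨hx, hxU⟩, rfl⟩, Or.inr ⟨rfl, hy, hyV⟩]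
  · rintro (⟨⟨hx, hxU⟩, rfl⟩ | ⟨rfl, hy, hyV⟩)
    exacts [⟨Or.inl ⟨hx, rfl⟩, hxU, hV⟩, ⟨Or.inr ⟨rfl, hy⟩, hU, hyV⟩]

lemma card_cross (hI : o ∉ I) : (cross o I J).card = I.card + J.card := by
  rw [cross, Finset.card_union_of_disjoint, Finset.card_product, Finset.card_product,
    Finset.card_singleton, mul_one, one_mul]
  rw [Finset.disjoint_left]
  rintro ⟨x, y⟩ h₁ h₂
  simp only [Finset.mem_product, Finset.mem_singleton] at h₁ h₂
  exact hI (h₂.1 ▸ h₁.1)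

lemma mk_mem_cross_left_iff (hJ : o ∉ J) (x : α) : (x, o) ∈ cross o I J ↔ x ∈ I := by
  simp [cross, hJ]

lemma mk_mem_cross_right_iff (hI : o ∉ I) (y : α) : (o, y) ∈ cross o I J ↔ y ∈ J := by
  simp [cross, hI]

lemma cross_inj (hI : o ∉ I) (hI' : o ∉ I') (hJ : o ∉ J) (hJ' : o ∉ J') :
    cross o I J = cross o I' J' ↔ I = I' ∧ J = J' := by
  refine ⟨fun h => ⟨?_, ?_⟩, fun h => h.1 ▸ h.2 ▸ rfl⟩ <;> ext x
  · rw [← mk_mem_cross_left_iff hJ, h, mk_mem_cross_left_iff hJ']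
  · rw [← mk_mem_cross_right_iff hI, h, mk_mem_cross_right_iff hI']

end cross

def twoBlocks (N A B : ℕ) : Finset ℕ := Finset.Ioc 0 A ∪ Finset.Ioc N (N + B)

section twoBlocks

variable {N A B s : ℕ}

lemma notMem_twoBlocks (hAN : A < N) : N ∉ twoBlocks N A B := by
  simp only [twoBlocks, Finset.mem_union, Finset.mem_Ioc]
  omega

lemma card_twoBlocks (hAN : A ≤ N) : (twoBlocks N A B).card = A + B := by
  rw [twoBlocks, Finset.card_union_of_disjoint, Nat.card_Ioc, Nat.card_Ioc]
  · omega
  · exact Finset.disjoint_left.2 fun i h₁ h₂ => by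
      simp only [Finset.mem_Ioc] at h₁ h₂
      omega

lemma twoBlocks_inter_Ioc (hAN : A ≤ N) (hsA : s ≤ A) (hsB : s ≤ B) :
    twoBlocks N A B ∩ Finset.Ioc s (s + N) = Finset.Ioc s A ∪ Finset.Ioc N (N + s) := by
  ext i
  simp only [twoBlocks, Finset.mem_inter, Finset.mem_union, Finset.mem_Ioc]
  omega

lemma card_twoBlocks_inter_Ioc (hAN : A ≤ N) (hsA : s ≤ A) (hsB : s ≤ B) :
    (twoBlocks N A B ∩ Finset.Ioc s (s + N)).card = A := by
  rw [twoBlocks_inter_Ioc hAN hsA hsB, Finset.card_union_of_disjoint, Nat.card_Ioc, Nat.card_Ioc]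
  · omega
  · exact Finset.disjoint_left.2 fun i h₁ h₂ => by
      simp only [Finset.mem_Ioc] at h₁ h₂
      omega

lemma twoBlocks_inter_Ioc_injOn (hN : 0 < N) :
    InjOn (fun s => twoBlocks N A B ∩ Finset.Ioc s (s + N)) (Iic B) := by
  -- the point `N + s'` of the second block tells the shifts apart
  have key : ∀ {s s'}, s ≤ B → s' ≤ B →
      twoBlocks N A B ∩ Finset.Ioc s (s + N) = twoBlocks N A B ∩ Finset.Ioc s' (s' + N) →
      s' ≤ s := by
    intro s s' hs hs' h
    have := Finset.ext_iff.1 h (N + s')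
    simp only [twoBlocks, Finset.mem_inter, Finset.mem_union, Finset.mem_Ioc] at this
    omega
  intro s hs s' hs' h
  exact le_antisymm (key hs' hs h.symm) (key hs hs' h)

end twoBlocks

lemma mul_le_aCount_cross_twoBlocks {N A B A' B' h h' : ℕ} (hAN : A < N) (hA'N : A' < N)
    (hhA : h ≤ A) (hhB : h ≤ B) (hh'A' : h' ≤ A') (hh'B' : h' ≤ B') :
    (h + 1) * (h' + 1) ≤ aCount (Ioo 0 1 ×ˢ Ioo 0 1)
      ((cross N (twoBlocks N A B) (twoBlocks N A' B')).image (latticeEmbed N)) (A + A') := by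
  set D := Finset.range (h + 1) ×ˢ Finset.range (h' + 1)
  have hD : ∀ st ∈ D, st.1 ≤ h ∧ st.2 ≤ h' := fun st hst => by
    simp only [D, Finset.mem_product, Finset.mem_range] at hst
    omega
  have hcut : ∀ st ∈ D, cross N (twoBlocks N A B) (twoBlocks N A' B') ∩ latticeBox N st =
      cross N (twoBlocks N A B ∩ Finset.Ioc st.1 (st.1 + N))
        (twoBlocks N A' B' ∩ Finset.Ioc st.2 (st.2 + N)) := fun st hst =>
    have := hD st hst
    cross_inter_product (Finset.mem_Ioc.2 ⟨by omega, by omega⟩)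
      (Finset.mem_Ioc.2 ⟨by omega, by omega⟩) _ _
  have hnot : ∀ {A B} s, A < N → N ∉ twoBlocks N A B ∩ Finset.Ioc s (s + N) :=
    fun s hA hmem => notMem_twoBlocks hA (Finset.mem_inter.1 hmem).1
  rw [← Finset.card_range (h + 1), ← Finset.card_range (h' + 1), ← Finset.card_product]
  refine card_le_aCount_of_injOn (by omega) (fun st hst => ?_) fun st hst st' hst' heq => ?_
  · obtain ⟨hs, ht⟩ := hD st hst
    rw [hcut st hst, card_cross (hnot _ hAN),
      card_twoBlocks_inter_Ioc hAN.le (by omega) (by omega),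
      card_twoBlocks_inter_Ioc hA'N.le (by omega) (by omega)]
  · obtain ⟨hs, ht⟩ := hD st hst
    obtain ⟨hs', ht'⟩ := hD st' hst'
    simp only [hcut st hst, hcut st' hst'] at heq
    rw [cross_inj (hnot _ hAN) (hnot _ hAN) (hnot _ hA'N) (hnot _ hA'N)] at heq
    exact Prod.ext
      (twoBlocks_inter_Ioc_injOn (by omega) (mem_Iic.2 (by omega)) (mem_Iic.2 (by omega)) heq.1)
      (twoBlocks_inter_Ioc_injOn (by omega) (mem_Iic.2 (by omega)) (mem_Iic.2 (by omega)) heq.2)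

lemma card_image_cross_twoBlocks {N A B A' B' : ℕ} (hAN : A < N) (hA'N : A' < N) :
    ((cross N (twoBlocks N A B) (twoBlocks N A' B')).image (latticeEmbed N)).card =
      A + B + (A' + B') := by
  rw [Finset.card_image_of_injective _ (latticeEmbed_injective (by omega)),
    card_cross (notMem_twoBlocks hAN), card_twoBlocks hAN.le, card_twoBlocks hA'N.le]

end UnitSquareKSets

open UnitSquareKSets

theorem stmt12_general (C : Set (ℝ × ℝ)) (hC : C = Set.Ioo (0 : ℝ) 1 ×ˢ Set.Ioo (0 : ℝ) 1)
    (c c' : ℝ) (hc : 0 < c) (hc' : c' < 1) :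
    ∃ α : ℝ, 0 < α ∧ ∃ n₀ : ℕ, ∀ n : ℕ, n₀ ≤ n → ∀ k : ℕ,
      c * n ≤ (k : ℝ) → (k : ℝ) ≤ c' * n →
      ∃ S : Finset (ℝ × ℝ), S.card = n ∧ α * (n : ℝ) ^ 2 ≤ (aCount C S k : ℝ) := by
  subst hC
  obtain ⟨γ, hγ, hγc, hγc'⟩ : ∃ γ : ℝ, 0 < γ ∧ 2 * γ ≤ c ∧ 2 * γ ≤ 1 - c' :=
    ⟨min c (1 - c') / 2, half_pos (lt_min hc (by linarith)),
      by linarith [min_le_left c (1 - c')], by linarith [min_le_right c (1 - c')]⟩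
  refine ⟨γ ^ 2, by positivity, 0, fun n _ k hk hk' => ?_⟩
  have hn : (0 : ℝ) ≤ n := n.cast_nonneg
  set h := ⌊γ * n⌋₊
  have hh : (h : ℝ) ≤ γ * n := Nat.floor_le (by positivity)
  have h2k : 2 * h ≤ k := by
    exact_mod_cast (show (2 * h : ℝ) ≤ k by nlinarith)
  have hkn : k + 2 * h ≤ n := by
    exact_mod_cast (show (k + 2 * h : ℝ) ≤ n by nlinarith)
  set S := (cross (n + 1) (twoBlocks (n + 1) (k - h) (n - k - h))
    (twoBlocks (n + 1) h h)).image (latticeEmbed (n + 1))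
  have hS : S.card = n := by
    rw [card_image_cross_twoBlocks (by omega) (by omega)]
    omega
  have hcount : (h + 1) * (h + 1) ≤ aCount (Ioo 0 1 ×ˢ Ioo 0 1) S k := by
    have := mul_le_aCount_cross_twoBlocks (B := n - k - h) (B' := h) (h := h) (h' := h)
      (by omega : k - h < n + 1) (by omega : h < n + 1) (by omega) (by omega) le_rfl le_rfl
    rwa [Nat.sub_add_cancel (by omega : h ≤ k)] at this
  refine ⟨S, hS, ?_⟩
  calc γ ^ 2 * (n : ℝ) ^ 2 = (γ * n) ^ 2 := by ring
    _ ≤ ((h + 1 : ℕ) : ℝ) ^ 2 := by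
      gcongr
      push_cast
      exact (Nat.lt_floor_add_one _).le
    _ ≤ _ := by exact_mod_cast (sq (h + 1)).trans_le hcount

/-- For the open unit square `C = (0,1)²` and any `0 < c < c' < 1` there are `α > 0`
and `n₀`, depending only on `c` and `c'`, such that for every `n ≥ n₀` and every
integer `k` with `cn ≤ k ≤ c'n` there is a set `S` of `n` points in the plane with
`a_k(S) ≥ α n²`. -/
theorem stmt12 (C : Set (ℝ × ℝ)) (hC : C = Set.Ioo (0 : ℝ) 1 ×ˢ Set.Ioo (0 : ℝ) 1)
    (c c' : ℝ) (hc : 0 < c) (hcc' : c < c') (hc' : c' < 1) :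
    ∃ α : ℝ, 0 < α ∧ ∃ n₀ : ℕ, ∀ n : ℕ, n₀ ≤ n → ∀ k : ℕ,
      c * n ≤ (k : ℝ) → (k : ℝ) ≤ c' * n →
      ∃ S : Finset (ℝ × ℝ), S.card = n ∧ α * (n : ℝ) ^ 2 ≤ (aCount C S k : ℝ) :=
  stmt12_general C hC c c' hc hc'
end

section
/- Let C ⊆ ℝ² be the interior of a convex body. Then the VC-dimension of the set system (ℝ², T_C) of translates of C is at most 3, and consequently for every n ≥ 1 and every set S ⊆ ℝ² with |S| = n, |{S ∩ (x+C) : x ∈ ℝ²}| ≤ C(n,0) + C(n,1) + C(n,2) + C(n,3). -/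
open Set Pointwise

theorem translateSet_eq_vadd (x : ℝ × ℝ) (C : Set (ℝ × ℝ)) : translateSet x C = x +ᵥ C := rfl

section Shattering

variable {ι α : Type*}

def Finset.ShatteredBy (A : Finset α) (F : ι → Set α) : Prop :=
  ∀ B ⊆ A, ∃ i, (B : Set α) = ↑A ∩ F i

namespace Finset.ShatteredBy

variable {A A' : Finset α} {F : ι → Set α}

theorem mono (hA : A.ShatteredBy F) (h : A' ⊆ A) : A'.ShatteredBy F := by
  intro B hB
  obtain ⟨i, hi⟩ := hA B (hB.trans h)
  refine ⟨i, ?_⟩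
  rw [← Set.inter_eq_left.mpr (coe_subset.mpr h), Set.inter_assoc, ← hi,
    Set.inter_eq_right.mpr (coe_subset.mpr hB)]

theorem exists_eq_inter (hA : A.ShatteredBy F) {S : Set α} (hS : S ⊆ A) :
    ∃ i, S = ↑A ∩ F i := by
  classical
  have hfin : S.Finite := A.finite_toSet.subset hS
  simpa using hA hfin.toFinset (by simpa [← coe_subset] using hS)

end Finset.ShatteredBy

theorem ncard_traces_le_sum_choose {F : ι → Set α} {d : ℕ}
    (hF : ∀ A : Finset α, A.ShatteredBy F → A.card ≤ d) (S : Finset α) :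
    {T : Set α | ∃ i, T = ↑S ∩ F i}.ncard ≤ ∑ k ∈ Finset.range (d + 1), S.card.choose k := by
  classical
  let 𝒜 : Finset (Finset α) := S.powerset.filter fun B => ∃ i, (B : Set α) = ↑S ∩ F i
  have htraces : {T : Set α | ∃ i, T = ↑S ∩ F i} = (↑) '' (𝒜 : Set (Finset α)) := by
    ext T
    constructor
    · rintro ⟨i, rfl⟩
      refine ⟨S.filter (· ∈ F i), ?_, by simp [Set.ext_iff]⟩
      simp only [𝒜, Finset.coe_filter, Finset.mem_powerset]
      exact ⟨Finset.filter_subset _ _, i, by ext; simp⟩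
    · rintro ⟨B, hB, rfl⟩
      exact (Finset.mem_filter.mp hB).2
  have hshatterer : 𝒜.shatterer ⊆ (Finset.range (d + 1)).biUnion S.powersetCard := by
    intro B hB
    rw [Finset.mem_shatterer] at hB
    obtain ⟨u, hu, hBu⟩ := hB.exists_superset
    have hBS : B ⊆ S := hBu.trans (Finset.mem_powerset.mp (Finset.mem_filter.mp hu).1)
    have hBF : B.ShatteredBy F := by
      intro B' hB'
      obtain ⟨u', hu', rfl⟩ := hB hB'
      obtain ⟨i, hi⟩ := (Finset.mem_filter.mp hu').2
      refine ⟨i, ?_⟩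
      rw [Finset.coe_inter, hi, ← Set.inter_assoc,
        Set.inter_eq_left.mpr (Finset.coe_subset.mpr hBS)]
    simp only [Finset.mem_biUnion, Finset.mem_range, Finset.mem_powersetCard]
    exact ⟨B.card, Nat.lt_succ_of_le (hF B hBF), hBS, rfl⟩
  calc {T : Set α | ∃ i, T = ↑S ∩ F i}.ncard = 𝒜.card := by
        rw [htraces, ncard_image_of_injective _ Finset.coe_injective, ncard_coe_finset]
    _ ≤ 𝒜.shatterer.card := Finset.card_le_card_shatterer 𝒜
    _ ≤ ∑ k ∈ Finset.range (d + 1), (S.powersetCard k).card :=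
        (Finset.card_le_card hshatterer).trans Finset.card_biUnion_le
    _ = ∑ k ∈ Finset.range (d + 1), S.card.choose k := by simp only [Finset.card_powersetCard]

end Shattering

section RealVectorSpace

variable {ι E : Type*} [AddCommGroup E] [Module ℝ E] {A : Finset E}

theorem Convex.mem_of_sub_mem_of_add_smul_mem {X : Set E} (hX : Convex ℝ X) {y t : E} {κ : ℝ}
    (hκ : 0 ≤ κ) (h₁ : y - t ∈ X) (h₂ : y + κ • t ∈ X) : y ∈ X := by
  refine hX.segment_subset h₁ h₂ ?_
  rw [segment_eq_image']
  refine ⟨1 / (1 + κ), ⟨by positivity, ?_⟩, ?_⟩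
  · rw [div_le_one (by positivity)]; linarith
  · match_scalars <;> field_simp <;> ring

theorem Convex.mem_vadd_of_add_smul_sub_mem_vadd {C : Set E} (hC : Convex ℝ C) {x y z : E}
    {κ : ℝ} (hκ : 0 ≤ κ) (hy : z ∈ y +ᵥ C) (hx : z + κ • (y - x) ∈ x +ᵥ C) : z ∈ x +ᵥ C := by
  rw [mem_vadd_set_iff_neg_vadd_mem, vadd_eq_add] at hy hx ⊢
  refine hC.mem_of_sub_mem_of_add_smul_mem (t := y - x) hκ ?_ ?_
  · convert hy using 1; abel
  · convert hx using 1; abel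

/- In the coordinates `(v, t)` centred at `p` we have `b = (-1, 0)`, `d = (δ, 0)`, `a = (α, β)`:
the ray from `a` meets `[b, d]` when `-1 ≤ α ≤ δ`, otherwise the ray from `b` (if `α < -1`) or
from `d` (if `δ < α`) meets `[p, a]`. -/
theorem exists_ray_meets_segment_of_coords {a b d p v t : E} {α β δ : ℝ} (hβ : 0 ≤ β)
    (hδ : 0 ≤ δ) (hb : b = p - v) (hd : d = p + δ • v) (ha : a = p + α • v + β • t) :
    ∃ κ : ℝ, 0 ≤ κ ∧ (b + κ • t ∈ segment ℝ p a ∨ d + κ • t ∈ segment ℝ p a ∨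
      a - κ • t ∈ segment ℝ b d) := by
  subst hb hd ha
  simp only [segment_eq_image', mem_image, mem_Icc]
  rcases lt_or_ge α (-1) with hlo | hlo
  · refine ⟨β / -α, div_nonneg hβ (by linarith), Or.inl ⟨1 / -α, ⟨by bound, ?_⟩, ?_⟩⟩
    · rw [div_le_one (by linarith)]; linarith
    · have : α ≠ 0 := by linarith
      match_scalars <;> field_simp
      ring
  rcases lt_or_ge δ α with hhi | hhi
  · refine ⟨δ * β / α, by bound, Or.inr (Or.inl ⟨δ / α, ⟨by bound, ?_⟩, ?_⟩)⟩
    · rw [div_le_one (by linarith)]; linarith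
    · have : α ≠ 0 := by linarith
      match_scalars <;> field_simp
      ring
  · have hθ₀ : 0 ≤ (α + 1) / (δ + 1) := div_nonneg (by linarith) (by linarith)
    refine ⟨β, hβ, Or.inr (Or.inr ⟨(α + 1) / (δ + 1), ⟨hθ₀, ?_⟩, ?_⟩)⟩
    · rw [div_le_one (by linarith)]; linarith
    · match_scalars <;> field_simp <;> ring

theorem Finset.ShatteredBy.disjoint_convexHull_of_subsingleton {F : ι → Set E}
    (hF : ∀ i, Convex ℝ (F i)) (hA : A.ShatteredBy F) {S T : Set E} (hST : Disjoint S T)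
    (hS : S ⊆ A) (hT : T ⊆ A) (hS₁ : S.Subsingleton) :
    Disjoint (convexHull ℝ S) (convexHull ℝ T) := by
  rw [hS₁.convex.convexHull_eq, Set.disjoint_left]
  intro p hpS hpT
  obtain ⟨i, hi⟩ := hA.exists_eq_inter hT
  have hTF : T ⊆ F i := by rw [hi]; exact Set.inter_subset_right
  have hpT' : p ∈ T := by rw [hi]; exact ⟨hS hpS, convexHull_min hTF (hF i) hpT⟩
  exact Set.disjoint_left.mp hST hpS hpT'

variable [FiniteDimensional ℝ E]

theorem exists_eq_smul_add_smul_of_linearIndependent (hE : Module.finrank ℝ E = 2) {v t : E}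
    (h : LinearIndependent ℝ ![v, t]) (u : E) :
    ∃ α β : ℝ, u = α • v + β • t := by
  have hu : u ∈ Submodule.span ℝ (range ![v, t]) := by
    rw [h.span_eq_top_of_card_eq_finrank' (by simp [hE])]; trivial
  obtain ⟨c, hc⟩ := (Submodule.mem_span_range_iff_exists_fun ℝ).mp hu
  exact ⟨c 0, c 1, by simpa [Fin.sum_univ_two] using hc.symm⟩

theorem exists_ray_meets_segment (hE : Module.finrank ℝ E = 2)
    {a b c d p t : E} (ht : t ≠ 0) (hac : p ∈ segment ℝ a c) (hbd : p ∈ segment ℝ b d) :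
    ∃ κ : ℝ, 0 ≤ κ ∧ (b + κ • t ∈ segment ℝ a c ∨ d + κ • t ∈ segment ℝ a c ∨
      a - κ • t ∈ segment ℝ b d ∨ c - κ • t ∈ segment ℝ b d) := by
  rcases eq_or_ne b p with rfl | hbp
  · exact ⟨0, le_rfl, Or.inl (by simpa using hac)⟩
  obtain ⟨δ, hδ, hdp⟩ :=
    (mem_segment_iff_sameRay.mp hbd).exists_nonneg_left (sub_ne_zero.mpr hbp.symm)
  have hb : b = p - (p - b) := by abel
  have hd : d = p + δ • (p - b) := by rw [hdp]; abel
  by_cases hind : LinearIndependent ℝ ![p - b, t]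
  · obtain ⟨α, β, hα⟩ := exists_eq_smul_add_smul_of_linearIndependent hE hind (a - c)
    obtain ⟨θ, ⟨hθ₀, hθ₁⟩, hp⟩ := by simpa only [segment_eq_image'] using hac
    have hpa : segment ℝ p a ⊆ segment ℝ a c :=
      (convex_segment a c).segment_subset hac (left_mem_segment ℝ a c)
    have hpc : segment ℝ p c ⊆ segment ℝ a c :=
      (convex_segment a c).segment_subset hac (right_mem_segment ℝ a c)
    rcases le_total 0 β with hβ | hβ
    · have ha : a = p + (θ * α) • (p - b) + (θ * β) • t := by
        rw [mul_smul, mul_smul, add_assoc, ← smul_add, ← hα, ← hp]; module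
      obtain ⟨κ, hκ, h | h | h⟩ :=
        exists_ray_meets_segment_of_coords (mul_nonneg hθ₀ hβ) hδ hb hd ha
      exacts [⟨κ, hκ, Or.inl (hpa h)⟩, ⟨κ, hκ, Or.inr (Or.inl (hpa h))⟩,
        ⟨κ, hκ, Or.inr (Or.inr (Or.inl h))⟩]
    · have hc : c = p + (-(1 - θ) * α) • (p - b) + (-(1 - θ) * β) • t := by
        rw [mul_smul, mul_smul, add_assoc, ← smul_add, ← hα, ← hp]; module
      obtain ⟨κ, hκ, h | h | h⟩ :=
        exists_ray_meets_segment_of_coords (by nlinarith) hδ hb hd hc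
      exacts [⟨κ, hκ, Or.inl (hpc h)⟩, ⟨κ, hκ, Or.inr (Or.inl (hpc h))⟩,
        ⟨κ, hκ, Or.inr (Or.inr (Or.inr h))⟩]
  -- `t` is parallel to `[b, d]`, so the ray from `b` or from `d` runs through `p`.
  · obtain ⟨μ, hμ⟩ : ∃ μ : ℝ, μ • t = p - b := by
      simpa [linearIndependent_fin2, ht] using hind
    rcases le_total 0 μ with hμ₀ | hμ₀
    · refine ⟨μ, hμ₀, Or.inl ?_⟩
      rwa [hμ, add_sub_cancel]
    · refine ⟨-(δ * μ), by nlinarith, Or.inr (Or.inl ?_)⟩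
      rwa [hd, ← hμ, smul_smul, neg_smul, add_neg_cancel_right]

theorem Convex.disjoint_segment_of_mem_vadd_diff (hE : Module.finrank ℝ E = 2) {C : Set E}
    (hC : Convex ℝ C) {x y a b c d : E}
    (ha : a ∈ (x +ᵥ C) \ (y +ᵥ C)) (hc : c ∈ (x +ᵥ C) \ (y +ᵥ C))
    (hb : b ∈ (y +ᵥ C) \ (x +ᵥ C)) (hd : d ∈ (y +ᵥ C) \ (x +ᵥ C)) :
    Disjoint (segment ℝ a c) (segment ℝ b d) := by
  rw [Set.disjoint_left]
  intro p hac hbd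
  have hxy : y - x ≠ 0 := by
    rw [sub_ne_zero]; rintro rfl; exact ha.2 ha.1
  have hX : segment ℝ a c ⊆ x +ᵥ C := (hC.vadd x).segment_subset ha.1 hc.1
  have hY : segment ℝ b d ⊆ y +ᵥ C := (hC.vadd y).segment_subset hb.1 hd.1
  obtain ⟨κ, hκ, h | h | h | h⟩ := exists_ray_meets_segment hE hxy hac hbd
  · exact hb.2 (hC.mem_vadd_of_add_smul_sub_mem_vadd hκ hb.1 (hX h))
  · exact hd.2 (hC.mem_vadd_of_add_smul_sub_mem_vadd hκ hd.1 (hX h))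
  · refine ha.2 (hC.mem_vadd_of_add_smul_sub_mem_vadd hκ ha.1 ?_)
    rw [← neg_sub y x, smul_neg, ← sub_eq_add_neg]; exact hY h
  · refine hc.2 (hC.mem_vadd_of_add_smul_sub_mem_vadd hκ hc.1 ?_)
    rw [← neg_sub y x, smul_neg, ← sub_eq_add_neg]; exact hY h

theorem Finset.ShatteredBy.disjoint_segment (hE : Module.finrank ℝ E = 2) {C : Set E}
    (hC : Convex ℝ C) (hA : A.ShatteredBy fun x : E => x +ᵥ C) {a b c d : E}
    (hac : ({a, c} : Set E) ⊆ A) (hbd : ({b, d} : Set E) ⊆ A)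
    (hdisj : Disjoint ({a, c} : Set E) ({b, d} : Set E)) :
    Disjoint (segment ℝ a c) (segment ℝ b d) := by
  obtain ⟨x, hx⟩ := hA.exists_eq_inter hac
  obtain ⟨y, hy⟩ := hA.exists_eq_inter hbd
  have hmem : ∀ {S T : Set E} {u v : E}, S = ↑A ∩ (u +ᵥ C) → T = ↑A ∩ (v +ᵥ C) →
      Disjoint S T → ∀ z ∈ S, z ∈ (u +ᵥ C) \ (v +ᵥ C) := by
    rintro S T u v rfl rfl hST z hz
    exact ⟨hz.2, fun hzv => Set.disjoint_left.mp hST hz ⟨hz.1, hzv⟩⟩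
  exact hC.disjoint_segment_of_mem_vadd_diff hE (hmem hx hy hdisj a (by simp))
    (hmem hx hy hdisj c (by simp)) (hmem hy hx hdisj.symm b (by simp))
    (hmem hy hx hdisj.symm d (by simp))

theorem Finset.ShatteredBy.card_ne_four (hE : Module.finrank ℝ E = 2) {C : Set E}
    (hC : Convex ℝ C) (hA : A.ShatteredBy fun x : E => x +ᵥ C) : A.card ≠ 4 := by
  intro h4
  have hdep : ¬AffineIndependent ℝ ((↑) : A → E) := fun hind => by
    have h₁ := hind.card_le_finrank_succ
    have h₂ := Submodule.finrank_le (vectorSpan ℝ (Set.range ((↑) : A → E)))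
    simp only [Fintype.card_coe, h4, hE] at h₁ h₂
    omega
  obtain ⟨I, p, hp₁, hp₂⟩ := Convex.radon_partition hdep
  set S : Set E := (↑) '' I
  set T : Set E := (↑) '' Iᶜ
  have hS : S ⊆ A := by rintro _ ⟨q, -, rfl⟩; exact q.2
  have hT : T ⊆ A := by rintro _ ⟨q, -, rfl⟩; exact q.2
  have hST : Disjoint S T := (disjoint_image_iff Subtype.val_injective).mpr disjoint_compl_right
  have hcard : S.ncard + T.ncard = 4 := by
    rw [← ncard_union_eq hST]
    simpa [S, T, ← image_union] using h4
  have hF : ∀ x, Convex ℝ (x +ᵥ C) := fun x => hC.vadd x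
  rcases (by omega : S.ncard ≤ 1 ∨ T.ncard ≤ 1 ∨ (S.ncard = 2 ∧ T.ncard = 2))
    with hS₁ | hT₁ | ⟨hS₂, hT₂⟩
  · exact Set.disjoint_left.mp (hA.disjoint_convexHull_of_subsingleton hF hST hS hT
      ((ncard_le_one_iff_subsingleton).mp hS₁)) hp₁ hp₂
  · exact Set.disjoint_left.mp (hA.disjoint_convexHull_of_subsingleton hF hST.symm hT hS
      ((ncard_le_one_iff_subsingleton).mp hT₁)) hp₂ hp₁
  · obtain ⟨a, c, -, hac⟩ := ncard_eq_two.mp hS₂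
    obtain ⟨b, d, -, hbd⟩ := ncard_eq_two.mp hT₂
    rw [hac, convexHull_pair] at hp₁
    rw [hbd, convexHull_pair] at hp₂
    exact Set.disjoint_left.mp
      (hA.disjoint_segment hE hC (hac ▸ hS) (hbd ▸ hT) (hac ▸ hbd ▸ hST)) hp₁ hp₂

theorem Finset.ShatteredBy.card_le_three (hE : Module.finrank ℝ E = 2) {C : Set E}
    (hC : Convex ℝ C) (hA : A.ShatteredBy fun x : E => x +ᵥ C) : A.card ≤ 3 := by
  by_contra! h
  obtain ⟨A', hA', h4⟩ := exists_subset_card_eq h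
  exact (hA.mono hA').card_ne_four hE hC h4

end RealVectorSpace

theorem stmt16_general (K : Set (ℝ × ℝ))
    (hKconv : Convex ℝ K)
    (C : Set (ℝ × ℝ)) (hC : C = interior K) :
    (∀ A : Finset (ℝ × ℝ),
      (∀ B ⊆ A, ∃ x : ℝ × ℝ, (↑B : Set (ℝ × ℝ)) = ↑A ∩ translateSet x C) →
      A.card ≤ 3) ∧
    (∀ n : ℕ, 1 ≤ n → ∀ S : Finset (ℝ × ℝ), S.card = n →
      Set.ncard {T : Set (ℝ × ℝ) | ∃ x : ℝ × ℝ, T = ↑S ∩ translateSet x C}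
        ≤ n.choose 0 + n.choose 1 + n.choose 2 + n.choose 3) := by
  have hVC : ∀ A : Finset (ℝ × ℝ), A.ShatteredBy (translateSet · C) → A.card ≤ 3 := by
    simp only [translateSet_eq_vadd]
    exact fun A hA => hA.card_le_three (by simp) (hC ▸ hKconv.interior)
  refine ⟨hVC, fun n _ S hS => ?_⟩
  simpa [hS, Finset.sum_range_succ] using ncard_traces_le_sum_choose hVC S

/-- If `C` is the interior of a convex body in the plane, then the VC-dimension of the
set system of translates of `C` is at most `3`: every finite set shattered by the
translates of `C` has at most `3` points. Consequently, for every `n ≥ 1` and every set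
`S` of `n` points, the number of subsets of `S` induced by translates of `C` is at most
`C(n,0) + C(n,1) + C(n,2) + C(n,3)`. -/
theorem stmt16 (K : Set (ℝ × ℝ))
    (hKcomp : IsCompact K) (hKconv : Convex ℝ K) (hKint : (interior K).Nonempty)
    (C : Set (ℝ × ℝ)) (hC : C = interior K) :
    (∀ A : Finset (ℝ × ℝ),
      (∀ B ⊆ A, ∃ x : ℝ × ℝ, (↑B : Set (ℝ × ℝ)) = ↑A ∩ translateSet x C) →
      A.card ≤ 3) ∧
    (∀ n : ℕ, 1 ≤ n → ∀ S : Finset (ℝ × ℝ), S.card = n →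
      Set.ncard {T : Set (ℝ × ℝ) | ∃ x : ℝ × ℝ, T = ↑S ∩ translateSet x C}
        ≤ n.choose 0 + n.choose 1 + n.choose 2 + n.choose 3) :=
  stmt16_general K hKconv C hC
end
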